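/- arXiv:2009.05018 — 7 statements merged into one kernel-verified Lean document; each statement's English description precedes it below -/
import Mathlib

section
/- In a valid utility game with no compromised agents, every pure Nash equilibrium a satisfies W(a*) ≤ 2·W(a) for any action profile a*, i.e., the price of anarchy is at least 1/2. -/
lemma biUnion_update_eq {R : Type*} [DecidableEq R] {n : ℕ}
    (a : Fin n → Finset R) (i : Fin n) (b : Finset R) :
    Finset.univ.biUnion (Function.update a i b)
      = b ∪ Finset.univ.biUnion (Function.update a i ∅) := by
  ext x
  simp only [Finset.mem_biUnion, Finset.mem_union, Finset.mem_univ, true_and]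
  constructor
  · rintro ⟨j, hj⟩
    by_cases h : j = i
    · subst h; simp [Function.update_self] at hj; exact Or.inl hj
    · exact Or.inr ⟨j, by simp [Function.update_of_ne h]; simpa [Function.update_of_ne h] using hj⟩
  · rintro (h | ⟨j, hj⟩)
    · exact ⟨i, by simp [h]⟩
    · by_cases hji : j = i
      · subst hji; simp at hj
      · exact ⟨j, by simpa [Function.update_of_ne hji] using hj⟩

/-- Vetta's theorem: in a valid utility game every pure Nash equilibrium is
within a factor 2 of any profile (price of anarchy ≥ 1/2). -/
theorem vug_poa_half {R : Type*} [DecidableEq R] {n : ℕ}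
    (w : Finset R → ℝ)
    (hmono : ∀ S T : Finset R, S ⊆ T → w S ≤ w T)
    (hnorm : w ∅ = 0)
    (hsub : ∀ A B C : Finset R, B ⊆ C → w (A ∪ B) - w B ≥ w (A ∪ C) - w C)
    (A : Fin n → Set (Finset R))
    (hA : ∀ i, (∅ : Finset R) ∈ A i)
    (W : (Fin n → Finset R) → ℝ)
    (hW : ∀ a, W a = w (Finset.univ.biUnion a))
    (U : Fin n → (Fin n → Finset R) → ℝ)
    (hU1 : ∀ (a : Fin n → Finset R) (i : Fin n),
      U i a ≥ W a - W (Function.update a i ∅))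
    (hU2 : ∀ a : Fin n → Finset R, ∑ i, U i a ≤ W a)
    (a : Fin n → Finset R) (ha : ∀ i, a i ∈ A i)
    (hne : ∀ i, ∀ b ∈ A i, U i a ≥ U i (Function.update a i b))
    (aopt : Fin n → Finset R) (hopt : ∀ i, aopt i ∈ A i) :
    W aopt ≤ 2 * W a := by
  set Ω : Finset R := Finset.univ.biUnion a with hΩ
  -- per-player bound
  have key : ∀ i : Fin n, w (Ω ∪ aopt i) - w Ω ≤ U i a := by
    intro i
    set Ωm : Finset R := Finset.univ.biUnion (Function.update a i ∅) with hΩm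
    have hΩeq : Ω = a i ∪ Ωm := by
      have := biUnion_update_eq a i (a i)
      simpa [Function.update_eq_self] using this
    have hsubset : Ωm ⊆ Ω := by rw [hΩeq]; exact Finset.subset_union_right
    have h1 : w (aopt i ∪ Ωm) - w Ωm ≥ w (aopt i ∪ Ω) - w Ω :=
      hsub (aopt i) Ωm Ω hsubset
    set a' := Function.update a i (aopt i) with ha'
    have hup : Function.update a' i ∅ = Function.update a i ∅ := by
      simp [ha', Function.update_idem]
    have hWa' : W a' = w (aopt i ∪ Ωm) := by
      rw [hW, ha', biUnion_update_eq]
    have hWm : W (Function.update a' i ∅) = w Ωm := by rw [hup, hW]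
    have h2 : U i a' ≥ w (aopt i ∪ Ωm) - w Ωm := by
      have := hU1 a' i
      rwa [hWa', hWm] at this
    have h3 : U i a ≥ U i a' := hne i (aopt i) (hopt i)
    calc w (Ω ∪ aopt i) - w Ω = w (aopt i ∪ Ω) - w Ω := by rw [Finset.union_comm]
      _ ≤ w (aopt i ∪ Ωm) - w Ωm := h1
      _ ≤ U i a' := h2
      _ ≤ U i a := h3
  -- telescoping over players
  have tele : ∀ s : Finset (Fin n),
      w (Ω ∪ s.biUnion aopt) - w Ω ≤ ∑ i ∈ s, (w (Ω ∪ aopt i) - w Ω) := by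
    intro s
    induction s using Finset.induction_on with
    | empty => simp
    | @insert j s hj ih =>
      rw [Finset.biUnion_insert, Finset.sum_insert hj]
      have hsubset : Ω ⊆ Ω ∪ s.biUnion aopt := Finset.subset_union_left
      have h1 : w (aopt j ∪ Ω) - w Ω ≥ w (aopt j ∪ (Ω ∪ s.biUnion aopt)) - w (Ω ∪ s.biUnion aopt) :=
        hsub (aopt j) Ω (Ω ∪ s.biUnion aopt) hsubset
      have heq : Ω ∪ (aopt j ∪ s.biUnion aopt) = aopt j ∪ (Ω ∪ s.biUnion aopt) := by
        ac_rfl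
      rw [heq]
      have := h1
      linarith [ih, Finset.union_comm (aopt j) Ω ▸ h1]
  have h4 : w (Ω ∪ Finset.univ.biUnion aopt) - w Ω ≤ ∑ i, (w (Ω ∪ aopt i) - w Ω) :=
    tele Finset.univ
  have h5 : ∑ i, (w (Ω ∪ aopt i) - w Ω) ≤ ∑ i, U i a :=
    Finset.sum_le_sum fun i _ => key i
  have h6 : ∑ i, U i a ≤ W a := hU2 a
  have h7 : W aopt ≤ w (Ω ∪ Finset.univ.biUnion aopt) := by
    rw [hW]; exact hmono _ _ Finset.subset_union_right
  have h8 : W a = w Ω := by rw [hW]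
  linarith
end

section
/- In a valid utility game where a set K of k agents is compromised (each compromised agent i best-responds to Uᵢ(aᵢ, ∅), i.e., maximizes its utility assuming all others play ∅, while non-compromised agents best-respond given the actions of all agents except the isolated ones), every such generalized equilibrium a satisfies W(a_opt) ≤ (2 + k)·W(a) for any profile a_opt. -/
/-- Submodular covering lemma: the marginal gain of adding a union is at most the
sum of individual marginal gains. -/
lemma vug_cover {R : Type*} [DecidableEq R] (w : Finset R → ℝ)
    (hsub : ∀ A B C : Finset R, B ⊆ C → w (A ∪ B) - w B ≥ w (A ∪ C) - w C)
    (B : Finset R) {ι : Type*} [DecidableEq ι] (f : ι → Finset R) (s : Finset ι) :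
    w (B ∪ s.biUnion f) - w B ≤ ∑ i ∈ s, (w (B ∪ f i) - w B) := by
  induction s using Finset.induction_on with
  | empty => simp
  | @insert j s hj ih =>
    rw [Finset.biUnion_insert, Finset.sum_insert hj]
    have h1 := hsub (f j) B (B ∪ s.biUnion f) Finset.subset_union_left
    have he : B ∪ (f j ∪ s.biUnion f) = f j ∪ (B ∪ s.biUnion f) := by
      ext x; simp [Finset.mem_union]; tauto
    have hc : w (f j ∪ B) = w (B ∪ f j) := by rw [Finset.union_comm]
    rw [he]
    linarith

/-- Theorem 1 (lower bound): with a set `K` of `k` compromised agents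
(blind or isolated), every generalized equilibrium of a valid utility game
is within a factor `2 + k` of any profile. -/
theorem vug_poa_compromised {R : Type*} [DecidableEq R] {n : ℕ}
    (w : Finset R → ℝ)
    (hmono : ∀ S T : Finset R, S ⊆ T → w S ≤ w T)
    (hnorm : w ∅ = 0)
    (hsub : ∀ A B C : Finset R, B ⊆ C → w (A ∪ B) - w B ≥ w (A ∪ C) - w C)
    (A : Fin n → Set (Finset R))
    (hA : ∀ i, (∅ : Finset R) ∈ A i)
    (W : (Fin n → Finset R) → ℝ)
    (hW : ∀ a, W a = w (Finset.univ.biUnion a))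
    (U : Fin n → (Fin n → Finset R) → ℝ)
    (hU1 : ∀ (a : Fin n → Finset R) (i : Fin n),
      U i a ≥ W a - W (Function.update a i ∅))
    (hU2 : ∀ a : Fin n → Finset R, ∑ i, U i a ≤ W a)
    -- compromised agents: `K`, of which the isolated ones are `I ⊆ K`
    (K I : Finset (Fin n)) (hIK : I ⊆ K) (k : ℕ) (hk : K.card = k)
    -- the profile masking the isolated agents' actions
    (mask : (Fin n → Finset R) → (Fin n → Finset R))
    (hmask : ∀ a j, mask a j = if j ∈ I then ∅ else a j)
    (a : Fin n → Finset R) (ha : ∀ i, a i ∈ A i)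
    -- compromised agents best-respond assuming everyone else plays ∅
    (hcomp : ∀ i ∈ K, ∀ b ∈ A i,
      U i (Function.update (fun _ => (∅ : Finset R)) i (a i)) ≥
      U i (Function.update (fun _ => (∅ : Finset R)) i b))
    -- non-compromised agents best-respond to the profile without the isolated agents
    (hne : ∀ i ∉ K, ∀ b ∈ A i,
      U i (Function.update (mask a) i (a i)) ≥
      U i (Function.update (mask a) i b))
    (aopt : Fin n → Finset R) (hopt : ∀ i, aopt i ∈ A i) :
    W aopt ≤ (2 + (k : ℝ)) * W a := by
  classical
  set B := Finset.univ.biUnion a with hB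
  set m := mask a with hmdef
  -- biUnion of an updated profile
  have bupd : ∀ (f : Fin n → Finset R) (i : Fin n) (s : Finset R),
      Finset.univ.biUnion (Function.update f i s)
        = s ∪ (Finset.univ.erase i).biUnion f := by
    intro f i s
    conv_lhs => rw [← Finset.insert_erase (Finset.mem_univ i)]
    rw [Finset.biUnion_insert, Function.update_self]
    congr 1
    refine Finset.biUnion_congr rfl (fun j hj => ?_)
    exact Function.update_of_ne (Finset.ne_of_mem_erase hj) _ _
  -- utilities are nonnegative
  have hWupd : ∀ (z : Fin n → Finset R) (j : Fin n),
      W (Function.update z j ∅) ≤ W z := by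
    intro z j
    rw [hW, hW, bupd, Finset.empty_union]
    refine hmono _ _ ?_
    exact Finset.biUnion_subset_biUnion_of_subset_left z (Finset.erase_subset _ _)
  have hUnn : ∀ (z : Fin n → Finset R) (j : Fin n), 0 ≤ U j z := by
    intro z j
    have h1 := hU1 z j
    have h2 := hWupd z j
    linarith
  have hUle : ∀ (z : Fin n → Finset R) (j : Fin n), U j z ≤ W z := by
    intro z j
    calc U j z ≤ ∑ i, U i z :=
          Finset.single_le_sum (fun i _ => hUnn z i) (Finset.mem_univ j)
      _ ≤ W z := hU2 z
  -- `m j ⊆ a j`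
  have hmsub : ∀ j, m j ⊆ a j := by
    intro j
    rw [hmdef, hmask]
    split
    · exact Finset.empty_subset _
    · exact subset_rfl
  have haB : ∀ j, a j ⊆ B := fun j => Finset.subset_biUnion_of_mem a (Finset.mem_univ j)
  -- the key per-agent bound
  have hbound : ∀ i : Fin n,
      w (B ∪ aopt i) - w B ≤ if i ∈ K then W a else U i m := by
    intro i
    by_cases hiK : i ∈ K
    · simp only [hiK, if_true]
      -- submodularity: marginal is at most w (aopt i)
      have h1 := hsub (aopt i) ∅ B (Finset.empty_subset B)
      rw [Finset.union_empty, hnorm] at h1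
      have hc : w (aopt i ∪ B) = w (B ∪ aopt i) := by rw [Finset.union_comm]
      -- compromised best response
      set p := Function.update (fun _ => (∅ : Finset R)) i (a i) with hp
      set q := Function.update (fun _ => (∅ : Finset R)) i (aopt i) with hq
      have hconst : ∀ (s : Finset R),
          Finset.univ.biUnion (Function.update (fun _ => (∅ : Finset R)) i s) = s := by
        intro s; rw [bupd]; simp
      have hWq : W q = w (aopt i) := by rw [hW, hq, hconst]
      have hq0 : Function.update q i ∅ = fun _ => (∅ : Finset R) := by
        rw [hq]
        funext j
        by_cases hji : j = i
        · subst hji; simp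
        · simp [Function.update_of_ne hji]
      have hWq0 : W (Function.update q i ∅) = 0 := by
        have he : Finset.univ.biUnion (fun _ : Fin n => (∅ : Finset R)) = ∅ := by
          ext x; simp
        rw [hq0, hW, he, hnorm]
      have hUq : U i q ≥ w (aopt i) := by
        have := hU1 q i
        rw [hWq, hWq0] at this
        linarith
      have hUp : U i p ≥ U i q := hcomp i hiK (aopt i) (hopt i)
      have hWp : W p = w (a i) := by rw [hW, hp, hconst]
      have hUpW : U i p ≤ w (a i) := by
        have := hUle p i; rwa [hWp] at this
      have haiB : w (a i) ≤ w B := hmono _ _ (haB i)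
      have hWaB : W a = w B := hW a
      linarith
    · simp only [hiK, if_false]
      -- non-compromised best response
      set C := (Finset.univ.erase i).biUnion m with hC
      have hCB : C ⊆ B := by
        refine Finset.biUnion_subset.2 (fun j _ => ?_)
        exact (hmsub j).trans (haB j)
      have hWopt : W (Function.update m i (aopt i)) = w (aopt i ∪ C) := by
        rw [hW, bupd]
      have hupd2 : Function.update (Function.update m i (aopt i)) i ∅
          = Function.update m i ∅ := Function.update_idem _ _ _
      have hW0 : W (Function.update (Function.update m i (aopt i)) i ∅) = w C := by
        rw [hupd2, hW, bupd, Finset.empty_union]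
      have h1 : U i (Function.update m i (aopt i)) ≥ w (aopt i ∪ C) - w C := by
        have := hU1 (Function.update m i (aopt i)) i
        rwa [hWopt, hW0] at this
      have hmi : m i = a i := by
        rw [hmdef, hmask]
        exact if_neg (fun h => hiK (hIK h))
      have hself : Function.update m i (a i) = m := by
        rw [← hmi]; exact Function.update_eq_self i m
      have h2 : U i m ≥ U i (Function.update m i (aopt i)) := by
        have := hne i hiK (aopt i) (hopt i)
        rwa [hmdef, ← hmdef, hself] at this
      have h3 := hsub (aopt i) C B hCB
      have hc : w (aopt i ∪ B) = w (B ∪ aopt i) := by rw [Finset.union_comm]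
      linarith
  -- assemble
  have hcover := vug_cover w hsub B aopt Finset.univ
  have hOopt : W aopt ≤ w (B ∪ Finset.univ.biUnion aopt) := by
    rw [hW]
    exact hmono _ _ Finset.subset_union_right
  have hsum : ∑ i, (w (B ∪ aopt i) - w B)
      ≤ ∑ i, (if i ∈ K then W a else U i m) :=
    Finset.sum_le_sum (fun i _ => hbound i)
  have hsplit : ∑ i, (if i ∈ K then W a else U i m)
      = ∑ i ∈ K, W a + ∑ i ∈ Kᶜ, U i m := by
    rw [← Finset.sum_add_sum_compl K]
    congr 1
    · exact Finset.sum_congr rfl (fun i hi => if_pos hi)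
    · refine Finset.sum_congr rfl (fun i hi => if_neg ?_)
      exact (Finset.mem_compl.1 hi)
  have hKsum : ∑ i ∈ K, W a = (k : ℝ) * W a := by
    rw [Finset.sum_const, hk, nsmul_eq_mul]
  have hKc : ∑ i ∈ Kᶜ, U i m ≤ W a := by
    have h1 : ∑ i ∈ Kᶜ, U i m ≤ ∑ i, U i m :=
      Finset.sum_le_sum_of_subset_of_nonneg (Finset.subset_univ _)
        (fun i _ _ => hUnn m i)
    have h2 := hU2 m
    have h3 : W m ≤ W a := by
      rw [hW, hW]
      refine hmono _ _ (Finset.biUnion_subset.2 (fun j _ => ?_))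
      exact (hmsub j).trans (haB j)
    linarith
  have hWaB : W a = w B := hW a
  have := hsum.trans (le_of_eq hsplit)
  calc W aopt ≤ w (B ∪ Finset.univ.biUnion aopt) := hOopt
    _ = w B + (w (B ∪ Finset.univ.biUnion aopt) - w B) := by ring
    _ ≤ w B + ∑ i, (w (B ∪ aopt i) - w B) := by linarith
    _ ≤ w B + ((k : ℝ) * W a + W a) := by
        rw [← hKsum]; linarith
    _ = (2 + (k : ℝ)) * W a := by rw [← hWaB]; ring
end

section
/- For the equal-share utility in a resource allocation game, the utility satisfies the marginal-contribution lower bound: ESᵢ(a) ≥ W(a) - W(∅, a_{-i}), where W(a) = Σ_{r used in a} W_r(|a|_r) with each W_r nonnegative, nondecreasing, and concave (decreasing marginal returns), and ESᵢ(a) = Σ_{r ∈ aᵢ} W_r(|a|_r)/|a|_r. -/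
private lemma equal_share_key (f : ℕ → ℝ) (h0 : f 0 = 0)
    (hconc : ∀ j, f (j + 1) - f j ≥ f (j + 2) - f (j + 1)) :
    ∀ k : ℕ, ((k : ℝ) + 1) * (f (k + 1) - f k) ≤ f (k + 1) := by
  intro k
  induction k with
  | zero => simp [h0]
  | succ k ih =>
    have h := hconc k
    push_cast at ih ⊢
    nlinarith [mul_le_mul_of_nonneg_left (sub_le_sub_left h 0)
      (by positivity : (0:ℝ) ≤ (k : ℝ) + 1)]

/-- The equal-share utility satisfies the marginal-contribution lower bound
`ESᵢ(a) ≥ W(a) - W(∅, a₋ᵢ)` in a resource allocation game. -/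
theorem equal_share_ge_marginal {R : Type*} [DecidableEq R] [Fintype R] {n : ℕ}
    (Wr : R → ℕ → ℝ)
    (h0 : ∀ r, Wr r 0 = 0)
    (hpos : ∀ r j, 0 ≤ Wr r j)
    (hmono : ∀ r j, Wr r j ≤ Wr r (j + 1))
    (hconc : ∀ r j, Wr r (j + 1) - Wr r j ≥ Wr r (j + 2) - Wr r (j + 1))
    (cnt : (Fin n → Finset R) → R → ℕ)
    (hcnt : ∀ a r, cnt a r = (Finset.univ.filter (fun i => r ∈ a i)).card)
    (W : (Fin n → Finset R) → ℝ)
    (hW : ∀ a, W a = ∑ r, Wr r (cnt a r))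
    (ES : Fin n → (Fin n → Finset R) → ℝ)
    (hES : ∀ i a, ES i a = ∑ r ∈ a i, Wr r (cnt a r) / (cnt a r))
    (a : Fin n → Finset R) (i : Fin n) :
    ES i a ≥ W a - W (Function.update a i ∅) := by
  classical
  set a' := Function.update a i ∅ with ha'
  -- counts
  have hmem : ∀ r ∈ a i, cnt a r = cnt a' r + 1 := by
    intro r hr
    rw [hcnt, hcnt]
    have hset : (Finset.univ.filter (fun j => r ∈ a' j))
        = (Finset.univ.filter (fun j => r ∈ a j)).erase i := by
      ext j
      by_cases hj : j = i <;>
        simp [ha', Function.update, hj, hr]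
    have hi : i ∈ Finset.univ.filter (fun j => r ∈ a j) := by simp [hr]
    rw [hset, Finset.card_erase_of_mem hi]
    have hp : 0 < (Finset.univ.filter (fun j => r ∈ a j)).card :=
      Finset.card_pos.mpr ⟨i, hi⟩
    omega
  have hnot : ∀ r, r ∉ a i → cnt a' r = cnt a r := by
    intro r hr
    rw [hcnt, hcnt]
    congr 1
    ext j
    by_cases hj : j = i <;> simp [ha', Function.update, hj, hr]
  have hsub : W a - W a' = ∑ r ∈ a i, (Wr r (cnt a r) - Wr r (cnt a' r)) := by
    rw [hW, hW, ← Finset.sum_sub_distrib]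
    refine (Finset.sum_subset (Finset.subset_univ (a i)) ?_).symm
    intro r _ hr
    rw [hnot r hr]; ring
  rw [hES, ge_iff_le, hsub]
  refine Finset.sum_le_sum ?_
  intro r hr
  have hc := hmem r hr
  set k := cnt a' r with hk
  rw [hc]
  have hkey := equal_share_key (Wr r) (h0 r) (hconc r) k
  push_cast
  rw [le_div_iff₀ (by positivity : (0:ℝ) < (k : ℝ) + 1)]
  linarith [hkey]
end

section
/- Tightness construction for Theorem 1: consider n players, k < n-1 of which are compromised, a central resource of value 1, private alternate resources of value 1-ε for compromised agents and value 1/n - δ for non-compromised agents (with 0 < ε, δ small), and additive welfare W(a) = Σ_{r ∈ ∪aᵢ} v_r. Under equal-share utilities, the profile where all players choose the central resource is a Nash equilibrium (each compromised agent best-responds assuming others play ∅; each non-compromised agent's equal share 1/n exceeds its alternative 1/n - δ), and its welfare 1 compared to the optimum 1 + k(1-ε) + (n-k-1)(1/n - δ) gives ratio converging to 1/(2+k) as ε, δ → 0 and n → ∞. -/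
/-- Tightness construction for Theorem 1: all players choosing the central
resource is an equilibrium, its welfare is 1, the optimum welfare is
`1 + k(1-ε) + (n-k-1)(1/n - δ)`, and the ratio tends to `1/(2+k)`. -/
theorem vug_poa_tightness {n : ℕ} (k : ℕ) (K : Finset (Fin n)) (hK : K.card = k)
    (hkn : k + 1 < n) (j₀ : Fin n) (hj₀ : j₀ ∉ K)
    (ε δ : ℝ) (hε : 0 < ε) (hε1 : ε < 1) (hδ : 0 < δ) (hδ1 : δ < 1 / n)
    (v : Option (Fin n) → ℝ)
    (hvc : v none = 1)
    (hvK : ∀ i ∈ K, v (some i) = 1 - ε)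
    (hvN : ∀ i ∉ K, v (some i) = 1 / n - δ)
    (W : (Fin n → Finset (Option (Fin n))) → ℝ)
    (hW : ∀ a, W a = ∑ r ∈ Finset.univ.biUnion a, v r)
    (ane aopt : Fin n → Finset (Option (Fin n)))
    (hane : ∀ i, ane i = {none})
    (haopt : ∀ i, aopt i = if i = j₀ then {none} else {some i}) :
    -- all-central is an equilibrium: compromised agents (acting as if alone)
    -- prefer the central resource, and each non-compromised agent's equal
    -- share 1/n exceeds its alternative 1/n - δ
    ((∀ i ∈ K, v none ≥ v (some i)) ∧ (∀ i ∉ K, (1 : ℝ) / n ≥ 1 / n - δ)) ∧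
    W ane = 1 ∧
    W aopt = 1 + (k : ℝ) * (1 - ε) + ((n : ℝ) - k - 1) * (1 / n - δ) ∧
    Filter.Tendsto
      (fun m : ℕ => (1 : ℝ) / (1 + (k : ℝ) + (((m : ℝ) - k - 1) * (1 / m))))
      Filter.atTop (nhds (1 / (2 + (k : ℝ)))) := by
  have hn : 0 < n := by omega
  refine ⟨⟨?_, ?_⟩, ?_, ?_, ?_⟩
  · intro i hi
    rw [hvc, hvK i hi]; linarith
  · intro i _; linarith
  · have h1 : Finset.univ.biUnion ane = ({none} : Finset (Option (Fin n))) := by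
      ext r
      simp only [Finset.mem_biUnion, Finset.mem_univ, true_and, hane,
        Finset.mem_singleton]
      exact ⟨fun ⟨_, h⟩ => h, fun h => ⟨⟨0, hn⟩, h⟩⟩
    rw [hW, h1, Finset.sum_singleton, hvc]
  · have h1 : Finset.univ.biUnion aopt
        = insert none ((Finset.univ.erase j₀).image some) := by
      ext r
      simp only [Finset.mem_biUnion, Finset.mem_univ, true_and, haopt,
        Finset.mem_insert, Finset.mem_image, Finset.mem_erase]
      constructor
      · rintro ⟨i, h⟩
        by_cases hij : i = j₀
        · simp [hij] at h; exact Or.inl h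
        · simp [hij] at h; exact Or.inr ⟨i, ⟨hij, trivial⟩, h.symm⟩
      · rintro (rfl | ⟨i, ⟨hij, -⟩, rfl⟩)
        · exact ⟨j₀, by simp⟩
        · exact ⟨i, by simp [hij]⟩
    rw [hW, h1, Finset.sum_insert (by simp), hvc,
      Finset.sum_image (by intro a _ b _ h; exact Option.some_injective _ h)]
    have hsplit : (Finset.univ.erase j₀ : Finset (Fin n))
        = K ∪ (Finset.univ.erase j₀ \ K) := by
      rw [Finset.union_sdiff_of_subset]
      intro i hi
      exact Finset.mem_erase.mpr ⟨fun h => hj₀ (h ▸ hi), Finset.mem_univ i⟩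
    rw [hsplit, Finset.sum_union Finset.disjoint_sdiff]
    have hs1 : ∑ i ∈ K, v (some i) = (k : ℝ) * (1 - ε) := by
      rw [Finset.sum_congr rfl (fun i hi => hvK i hi), Finset.sum_const, hK,
        nsmul_eq_mul]
    have hcard : (Finset.univ.erase j₀ \ K).card = n - 1 - k := by
      rw [Finset.card_sdiff_of_subset]
      · simp [hK]
      · intro i hi
        exact Finset.mem_erase.mpr ⟨fun h => hj₀ (h ▸ hi), Finset.mem_univ i⟩
    have hs2 : ∑ i ∈ Finset.univ.erase j₀ \ K, v (some i)
        = ((n : ℝ) - k - 1) * (1 / n - δ) := by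
      rw [Finset.sum_congr rfl (fun i hi => hvN i (Finset.mem_sdiff.mp hi).2),
        Finset.sum_const, hcard, nsmul_eq_mul]
      congr 1
      have : ((n - 1 - k : ℕ) : ℝ) = (n : ℝ) - k - 1 := by
        push_cast [Nat.cast_sub (by omega : k ≤ n - 1), Nat.cast_sub (by omega : 1 ≤ n)]
        ring
      rw [this]
    rw [hs1, hs2]; ring
  · have h2k : (2 : ℝ) + k ≠ 0 := by positivity
    have hlim : Filter.Tendsto (fun m : ℕ => ((m : ℝ) - k - 1) * (1 / m))
        Filter.atTop (nhds 1) := by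
      have heq : ∀ᶠ m : ℕ in Filter.atTop,
          ((m : ℝ) - k - 1) * (1 / m) = 1 - ((k : ℝ) + 1) * (1 / m) := by
        filter_upwards [Filter.eventually_ge_atTop 1] with m hm
        have hm0 : (m : ℝ) ≠ 0 := by positivity
        field_simp
        ring
      have : Filter.Tendsto (fun m : ℕ => 1 - ((k : ℝ) + 1) * (1 / m))
          Filter.atTop (nhds (1 - ((k : ℝ) + 1) * 0)) := by
        exact (tendsto_const_nhds.sub
          (tendsto_const_nhds.mul tendsto_one_div_atTop_nhds_zero_nat))
      have h2 := Filter.Tendsto.congr' (heq.mono fun m hm => hm.symm) this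
      simpa using h2
    have : Filter.Tendsto
        (fun m : ℕ => (1 : ℝ) / (1 + (k : ℝ) + (((m : ℝ) - k - 1) * (1 / m))))
        Filter.atTop (nhds (1 / (1 + (k : ℝ) + 1))) := by
      apply Filter.Tendsto.div tendsto_const_nhds
        (tendsto_const_nhds.add hlim)
      intro h; apply h2k; linarith
    convert this using 2
    ring
end

section
/- In a valid utility game with marginal-contribution utilities where all n agents are compromised (blind or isolated), every generalized equilibrium a satisfies W(a_opt) ≤ n·W(a), i.e., the ratio is at least 1/n. -/
lemma w_subadd_biUnion {R ι : Type*} [DecidableEq R] [DecidableEq ι]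
    (w : Finset R → ℝ) (hnorm : w ∅ = 0)
    (hsub : ∀ A B C : Finset R, B ⊆ C → w (A ∪ B) - w B ≥ w (A ∪ C) - w C)
    (f : ι → Finset R) (s : Finset ι) :
    w (s.biUnion f) ≤ ∑ i ∈ s, w (f i) := by
  induction s using Finset.induction with
  | empty => simp [hnorm]
  | @insert i s hnotmem ih =>
    rw [Finset.biUnion_insert, Finset.sum_insert hnotmem]
    have h := hsub (f i) ∅ (s.biUnion f) (Finset.empty_subset _)
    simp [hnorm] at h
    linarith

/-- With all `n` agents compromised and marginal-contribution utilities,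
any generalized equilibrium is within a factor `n` of any profile. -/
theorem all_compromised_poa {R : Type*} [DecidableEq R] {n : ℕ}
    (w : Finset R → ℝ)
    (hmono : ∀ S T : Finset R, S ⊆ T → w S ≤ w T)
    (hnorm : w ∅ = 0)
    (hsub : ∀ A B C : Finset R, B ⊆ C → w (A ∪ B) - w B ≥ w (A ∪ C) - w C)
    (A : Fin n → Set (Finset R))
    (hA : ∀ i, (∅ : Finset R) ∈ A i)
    (a : Fin n → Finset R) (ha : ∀ i, a i ∈ A i)
    -- every agent independently maximizes the welfare of its own action alone
    (hbr : ∀ i, ∀ c ∈ A i, w (a i) ≥ w c)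
    (aopt : Fin n → Finset R) (hopt : ∀ i, aopt i ∈ A i) :
    w (Finset.univ.biUnion aopt) ≤ (n : ℝ) * w (Finset.univ.biUnion a) := by
  have h1 := w_subadd_biUnion w hnorm hsub aopt Finset.univ
  have h2 : ∑ i, w (aopt i) ≤ ∑ i, w (a i) :=
    Finset.sum_le_sum fun i _ => hbr i _ (hopt i)
  have h3 : ∑ i, w (a i) ≤ (n : ℝ) * w (Finset.univ.biUnion a) := by
    calc ∑ i : Fin n, w (a i) ≤ ∑ _i : Fin n, w (Finset.univ.biUnion a) :=
          Finset.sum_le_sum fun i _ => hmono _ _ (Finset.subset_biUnion_of_mem a (Finset.mem_univ i))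
      _ = (n : ℝ) * w (Finset.univ.biUnion a) := by simp [Finset.sum_const, mul_comm]
  linarith
end

section
/- Marginal-contribution utilities satisfy the valid utility game conditions: if W is submodular, monotone, and normalized, then MCᵢ(a) := W(a) - W(∅, a_{-i}) satisfies (i) MCᵢ(a) ≥ W(a) - W(∅, a_{-i}) (trivially with equality) and (ii) Σᵢ MCᵢ(a) ≤ W(a). -/
/-!
Removing the players one at a time, in any order, telescopes `W a - W ∅`. By submodularity the
loss from removing player `i` alone is at most its loss at the moment it is removed in this
sequence, when fewer resources of the others remain, so the marginal contributions sum to at most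
`W a - W ∅ = W a`.
-/

namespace Finset

variable {ι R : Type*} [DecidableEq ι] [DecidableEq R]

theorem biUnion_update_empty (s : Finset ι) (a : ι → Finset R) (i : ι) :
    s.biUnion (Function.update a i ∅) = (s.erase i).biUnion a := by
  ext x
  simp only [mem_biUnion, mem_erase, Function.update_apply]
  constructor
  · rintro ⟨j, hj, hx⟩
    split_ifs at hx with hji
    · simp at hx
    · exact ⟨j, ⟨hji, hj⟩, hx⟩
  · rintro ⟨j, ⟨hji, hj⟩, hx⟩
    exact ⟨j, hj, by rwa [if_neg hji]⟩

section Submodular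

variable (w : Finset R → ℝ)
  (hsub : ∀ A B C : Finset R, B ⊆ C → w (A ∪ B) - w B ≥ w (A ∪ C) - w C)
include hsub

theorem marginal_biUnion_le_of_submodular (a : ι → Finset R) (B : Finset R) {s : Finset ι} {i : ι}
    (hi : i ∈ s) :
    w (B ∪ s.biUnion a) - w (B ∪ (s.erase i).biUnion a) ≤
      w (s.biUnion a) - w ((s.erase i).biUnion a) := by
  have hsplit : s.biUnion a = a i ∪ (s.erase i).biUnion a := by
    rw [← biUnion_insert, insert_erase hi]
  rw [hsplit, union_left_comm]
  exact hsub _ _ _ subset_union_right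

theorem sum_marginal_biUnion_le_of_submodular (a : ι → Finset R) (s : Finset ι) :
    ∑ i ∈ s, (w (s.biUnion a) - w ((s.erase i).biUnion a)) ≤ w (s.biUnion a) - w ∅ := by
  induction s using Finset.induction_on with
  | empty => simp
  | @insert k s hk ih =>
    have hrest : ∀ i ∈ s, w ((insert k s).biUnion a) - w (((insert k s).erase i).biUnion a) ≤
        w (s.biUnion a) - w ((s.erase i).biUnion a) := by
      intro i hi
      have hki : k ≠ i := fun h => hk (h ▸ hi)
      rw [erase_insert_of_ne hki, biUnion_insert, biUnion_insert]
      exact marginal_biUnion_le_of_submodular w hsub a (a k) hi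
    rw [sum_insert hk, erase_insert hk]
    linarith [sum_le_sum hrest]

end Submodular

end Finset

theorem mc_is_valid_utility_general {R : Type*} [DecidableEq R] {n : ℕ}
    (w : Finset R → ℝ)
    (hnorm : w ∅ = 0)
    (hsub : ∀ A B C : Finset R, B ⊆ C → w (A ∪ B) - w B ≥ w (A ∪ C) - w C)
    (W : (Fin n → Finset R) → ℝ)
    (hW : ∀ a, W a = w (Finset.univ.biUnion a))
    (MC : Fin n → (Fin n → Finset R) → ℝ)
    (hMC : ∀ i a, MC i a = W a - W (Function.update a i ∅))
    (a : Fin n → Finset R) :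
    (∀ i, MC i a ≥ W a - W (Function.update a i ∅)) ∧
    (∑ i, MC i a ≤ W a) := by
  refine ⟨fun i => (hMC i a).ge, ?_⟩
  simp only [hMC, hW, Finset.biUnion_update_empty]
  linarith [Finset.sum_marginal_biUnion_le_of_submodular w hsub a Finset.univ]

/-- Marginal-contribution utilities satisfy the valid utility game conditions. -/
theorem mc_is_valid_utility {R : Type*} [DecidableEq R] {n : ℕ}
    (w : Finset R → ℝ)
    (hmono : ∀ S T : Finset R, S ⊆ T → w S ≤ w T)
    (hnorm : w ∅ = 0)
    (hsub : ∀ A B C : Finset R, B ⊆ C → w (A ∪ B) - w B ≥ w (A ∪ C) - w C)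
    (W : (Fin n → Finset R) → ℝ)
    (hW : ∀ a, W a = w (Finset.univ.biUnion a))
    (MC : Fin n → (Fin n → Finset R) → ℝ)
    (hMC : ∀ i a, MC i a = W a - W (Function.update a i ∅))
    (a : Fin n → Finset R) :
    (∀ i, MC i a ≥ W a - W (Function.update a i ∅)) ∧
    (∑ i, MC i a ≤ W a) :=
  mc_is_valid_utility_general w hnorm hsub W hW MC hMC a
end

section
/- In the example of Figure 5 (Theorem 2 tightness): n players, k compromised, compromised agent i chooses between a shared resource of value 1+ε (shared with all compromised agents and one non-compromised agent with no alternative) and a private resource of value 1; welfare is additive over distinct selected resources. Each compromised agent, maximizing the value of its own action in isolation, selects the 1+ε resource; the resulting equilibrium has welfare 1+ε while the optimum has welfare k + 1 + ε; hence the ratio tends to 1/(1+k) as ε → 0. -/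
/-!
Every compromised agent strictly prefers the shared resource (`1 + ε > 1`), so in equilibrium
they all crowd onto it and, welfare being additive over *distinct* resources, it is counted
once. In the optimum each compromised agent takes its private resource instead, adding `1`
per agent, while the agent without alternatives keeps the shared one.
-/

open Finset Filter Topology

theorem biUnion_ite_singleton_of_mem {ι α : Type*} [DecidableEq α] {s : Finset ι}
    (p : ι → Prop) [DecidablePred p] {i₀ : ι} (hi₀ : i₀ ∈ s) (hp : p i₀) (x : α) :
    s.biUnion (fun i => if p i then {x} else ∅) = {x} := by
  ext r; simp only [mem_biUnion, mem_singleton]; grind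

theorem biUnion_ite_image_insert {ι α : Type*} [DecidableEq ι] [DecidableEq α] [Fintype ι]
    (K : Finset ι) (f : ι → α) {j₀ : ι} (hj₀ : j₀ ∉ K) (x : α) :
    univ.biUnion (fun i => if i ∈ K then {f i} else if i = j₀ then {x} else ∅) =
      insert x (K.image f) := by
  ext r; simp only [mem_biUnion, mem_univ, true_and, mem_insert, mem_image]; grind

theorem tendsto_add_div_add_nhdsGT_zero {a b : ℝ} (hb : b ≠ 0) :
    Tendsto (fun e : ℝ => (a + e) / (b + e)) (𝓝[>] 0) (𝓝 (a / b)) := by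
  have h : ContinuousAt (fun e : ℝ => (a + e) / (b + e)) 0 :=
    (continuousAt_const.add continuousAt_id).div (continuousAt_const.add continuousAt_id)
      (by simpa using hb)
  simpa using h.tendsto.mono_left nhdsWithin_le_nhds

/-- Tightness construction for Theorem 2: compromised agents all choose the
shared `1 + ε` resource, the equilibrium welfare is `1 + ε`, the optimum is
`k + 1 + ε`, and the ratio tends to `1/(1+k)` as `ε → 0⁺`. -/
theorem mc_poa_tightness {n : ℕ} (k : ℕ) (K : Finset (Fin n)) (hK : K.card = k)
    (j₀ : Fin n) (hj₀ : j₀ ∉ K)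
    (ε : ℝ) (hε : 0 < ε)
    (v : Option (Fin n) → ℝ)
    (hvc : v none = 1 + ε)
    (hvp : ∀ i, v (some i) = 1)
    (W : (Fin n → Finset (Option (Fin n))) → ℝ)
    (hW : ∀ a, W a = ∑ r ∈ Finset.univ.biUnion a, v r)
    (ane aopt : Fin n → Finset (Option (Fin n)))
    (hane : ∀ i, ane i = if i ∈ K ∨ i = j₀ then {none} else ∅)
    (haopt : ∀ i, aopt i =
      if i ∈ K then {some i} else if i = j₀ then {none} else ∅) :
    (∀ i ∈ K, v none > v (some i)) ∧
    W ane = 1 + ε ∧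
    W aopt = (k : ℝ) + 1 + ε ∧
    Filter.Tendsto (fun e : ℝ => (1 + e) / ((k : ℝ) + 1 + e))
      (nhdsWithin 0 (Set.Ioi 0)) (nhds (1 / (1 + (k : ℝ)))) := by
  refine ⟨fun i _ => by rw [hvc, hvp]; linarith, ?_, ?_, ?_⟩
  · rw [hW, funext hane, biUnion_ite_singleton_of_mem _ (mem_univ j₀) (Or.inr rfl),
      sum_singleton, hvc]
  · rw [hW, funext haopt, biUnion_ite_image_insert K some hj₀, sum_insert (by simp),
      sum_image (Option.some_injective _).injOn]
    simp only [hvc, hvp, sum_const, hK, nsmul_one]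
    ring
  · rw [add_comm 1 (k : ℝ)]
    exact tendsto_add_div_add_nhdsGT_zero (by positivity)
end
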